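/- Suppose q : ℝ → ℝ^N is a twice continuously differentiable solution of the closed-loop system ρ·q̈ + (C + U·C̃)·q̇ + K·q = 0 with the feedback U(t) = u_max·s(t)/√(1 + s(t)²), s(t) = q̇(t)ᵀC̃q̇(t). Then there exists c > 0 such that c·(|q(t)|² + |q̇(t)|²) ≤ V(q(0), q̇(0)) for all t ≥ 0; in particular q and q̇ are bounded on [0, ∞). -/

import Mathlib

/-! The energy `V` is a Lyapunov function: along a solution its derivative is
`-q̇ᵀ (C + U C̃) q̇ ≤ 0`, since `U ≥ 0` and `C`, `C̃` are positive semidefinite. So `V` does not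
increase, and as `K` is positive definite, `V q p ≥ min (ρ/2) (λ/2) (|q|² + |p|²)` for some `λ > 0`
(the minimum of `xᵀKx` on the compact unit sphere). -/

open Matrix

noncomputable def V {N : ℕ} (ρ : ℝ) (K : Matrix (Fin N) (Fin N) ℝ)
    (q p : Fin N → ℝ) : ℝ :=
  ρ / 2 * (p ⬝ᵥ p) + 1 / 2 * (q ⬝ᵥ K.mulVec q)

section Calculus

variable {m n : Type*} [Fintype m] [Fintype n] {f g : ℝ → n → ℝ} {f' g' : n → ℝ} {t : ℝ}

theorem HasDerivAt.dotProduct (hf : HasDerivAt f f' t) (hg : HasDerivAt g g' t) :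
    HasDerivAt (fun t => f t ⬝ᵥ g t) (f' ⬝ᵥ g t + f t ⬝ᵥ g') t := by
  simp only [_root_.dotProduct, ← Finset.sum_add_distrib]
  exact .fun_sum fun i _ => (hasDerivAt_pi.mp hf i).mul (hasDerivAt_pi.mp hg i)

theorem HasDerivAt.mulVec (M : Matrix m n ℝ) (hg : HasDerivAt g g' t) :
    HasDerivAt (fun t => M *ᵥ g t) (M *ᵥ g') t :=
  M.mulVecLin.toContinuousLinearMap.hasFDerivAt.comp_hasDerivAt t hg

end Calculus

theorem Matrix.PosDef.exists_pos_mul_dotProduct_self_le {n : Type*} [Fintype n]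
    {K : Matrix n n ℝ} (hK : K.PosDef) :
    ∃ c > 0, ∀ x : n → ℝ, c * (x ⬝ᵥ x) ≤ x ⬝ᵥ K *ᵥ x := by
  set f : EuclideanSpace ℝ n → ℝ := fun y => y.ofLp ⬝ᵥ K *ᵥ y.ofLp
  have hf : Continuous f := by unfold f; fun_prop
  have hpos : ∀ y ∈ Metric.sphere (0 : EuclideanSpace ℝ n) 1, 0 < f y := by
    intro y hy
    have hy0 : y.ofLp ≠ 0 := (WithLp.ofLp_eq_zero 2).ne.mpr (ne_zero_of_mem_unit_sphere ⟨y, hy⟩)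
    simpa [star_trivial] using hK.dotProduct_mulVec_pos hy0
  obtain ⟨c, hc, hcf⟩ := (isCompact_sphere 0 1).exists_forall_le' hf.continuousOn hpos
  refine ⟨c, hc, fun x => ?_⟩
  rcases eq_or_ne x 0 with rfl | hx
  · simp
  set r := ‖WithLp.toLp 2 x‖
  have hr : 0 < r := by simpa [r] using hx
  have hxx : x ⬝ᵥ x = r ^ 2 := by
    rw [← real_inner_self_eq_norm_sq, EuclideanSpace.inner_toLp_toLp, star_trivial]
  have hy := hcf (r⁻¹ • WithLp.toLp 2 x) (by simp [norm_smul, r, hr.ne'])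
  simp only [f, WithLp.ofLp_smul, mulVec_smul, dotProduct_smul,
    smul_dotProduct, smul_eq_mul] at hy
  rw [hxx]
  calc c * r ^ 2 ≤ (r⁻¹ * (r⁻¹ * (x ⬝ᵥ K *ᵥ x))) * r ^ 2 := by gcongr
    _ = x ⬝ᵥ K *ᵥ x := by field_simp

theorem hasDerivAt_V {N : ℕ} {ρ : ℝ} {K : Matrix (Fin N) (Fin N) ℝ} (hK : K.IsSymm)
    {q p : ℝ → Fin N → ℝ} {p' : Fin N → ℝ} {t : ℝ}
    (hq : HasDerivAt q (p t) t) (hp : HasDerivAt p p' t) :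
    HasDerivAt (fun t => V ρ K (q t) (p t)) (p t ⬝ᵥ (ρ • p' + K *ᵥ q t)) t := by
  refine (((hp.dotProduct hp).const_mul (ρ / 2)).add
    ((hq.dotProduct (hq.mulVec K)).const_mul (1 / 2))).congr_deriv ?_
  have hsym : q t ⬝ᵥ K *ᵥ p t = p t ⬝ᵥ K *ᵥ q t := by
    rw [dotProduct_mulVec, ← mulVec_transpose, hK.eq, dotProduct_comm]
  rw [dotProduct_add, dotProduct_smul, hsym, dotProduct_comm p']
  simp only [smul_eq_mul]
  ring

theorem antitone_V_of_dissipative {N : ℕ} {ρ : ℝ} {K : Matrix (Fin N) (Fin N) ℝ} (hK : K.IsSymm)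
    {q : ℝ → Fin N → ℝ} (hq : Differentiable ℝ q) (hq' : Differentiable ℝ (deriv q))
    (hdiss : ∀ t, deriv q t ⬝ᵥ (ρ • deriv (deriv q) t + K *ᵥ q t) ≤ 0) :
    Antitone fun t => V ρ K (q t) (deriv q t) :=
  antitone_of_hasDerivAt_nonpos
    (fun t => hasDerivAt_V hK (hq t).hasDerivAt (hq' t).hasDerivAt) hdiss

theorem min_mul_add_le_V {N : ℕ} {ρ c : ℝ} {K : Matrix (Fin N) (Fin N) ℝ}
    (hK : ∀ x, c * (x ⬝ᵥ x) ≤ x ⬝ᵥ K *ᵥ x) (q p : Fin N → ℝ) :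
    min (ρ / 2) (c / 2) * (q ⬝ᵥ q + p ⬝ᵥ p) ≤ V ρ K q p := by
  have hq : 0 ≤ q ⬝ᵥ q := by simpa using dotProduct_star_self_nonneg q
  have hp : 0 ≤ p ⬝ᵥ p := by simpa using dotProduct_star_self_nonneg p
  calc min (ρ / 2) (c / 2) * (q ⬝ᵥ q + p ⬝ᵥ p)
      = min (ρ / 2) (c / 2) * (q ⬝ᵥ q) + min (ρ / 2) (c / 2) * (p ⬝ᵥ p) := mul_add _ _ _
    _ ≤ c / 2 * (q ⬝ᵥ q) + ρ / 2 * (p ⬝ᵥ p) := by gcongr; exacts [min_le_right _ _, min_le_left _ _]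
    _ ≤ V ρ K q p := by unfold V; linarith [hK q]

theorem sqrt_le_sqrt_div_of_mul_add_le {a b c B : ℝ} (hc : 0 < c) (ha : 0 ≤ a) (hb : 0 ≤ b)
    (h : c * (a + b) ≤ B) : √a ≤ √(B / c) ∧ √b ≤ √(B / c) := by
  constructor <;> refine Real.sqrt_le_sqrt ((le_div_iff₀ hc).mpr ?_) <;> nlinarith

theorem stmt_5_general (N : ℕ) (ρ u_max : ℝ) (hρ : 0 < ρ) (hu : 0 < u_max)
    (C Ct K : Matrix (Fin N) (Fin N) ℝ)
    (hC : C.PosSemidef) (hCt : Ct.PosDef) (hK : K.PosDef)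
    (q : ℝ → Fin N → ℝ) (hq : ContDiff ℝ 2 q)
    (U s : ℝ → ℝ)
    (hs : ∀ t, s t = deriv q t ⬝ᵥ Ct.mulVec (deriv q t))
    (hU : ∀ t, U t = u_max * s t / Real.sqrt (1 + s t ^ 2))
    (hode : ∀ t, ρ • deriv (deriv q) t + C.mulVec (deriv q t)
        + U t • Ct.mulVec (deriv q t) + K.mulVec (q t) = 0) :
    (∃ c > (0:ℝ), ∀ t ≥ (0:ℝ),
        c * (q t ⬝ᵥ q t + deriv q t ⬝ᵥ deriv q t) ≤ V ρ K (q 0) (deriv q 0)) ∧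
    ∃ M : ℝ, ∀ t ≥ (0:ℝ),
        Real.sqrt (q t ⬝ᵥ q t) ≤ M ∧ Real.sqrt (deriv q t ⬝ᵥ deriv q t) ≤ M := by
  have hU_nonneg (t : ℝ) : 0 ≤ U t := by
    have hs_nonneg : 0 ≤ s t := by
      simpa [hs t] using hCt.posSemidef.dotProduct_mulVec_nonneg (deriv q t)
    rw [hU t]
    positivity
  have hdiss (t : ℝ) : deriv q t ⬝ᵥ (ρ • deriv (deriv q) t + K *ᵥ q t) ≤ 0 := by
    have hbalance : ρ • deriv (deriv q) t + K *ᵥ q t = -((C + U t • Ct) *ᵥ deriv q t) := by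
      rw [add_mulVec, smul_mulVec]
      linear_combination (norm := module) hode t
    rw [hbalance, dotProduct_neg, neg_nonpos]
    simpa using (hC.add (hCt.posSemidef.smul (hU_nonneg t))).dotProduct_mulVec_nonneg (deriv q t)
  have hV := antitone_V_of_dissipative (isHermitian_iff_isSymm.mp hK.isHermitian)
    (hq.differentiable (by norm_num)) hq.differentiable_deriv_two hdiss
  obtain ⟨cK, hcK, hKcoercive⟩ := hK.exists_pos_mul_dotProduct_self_le
  have hbound : ∀ t ≥ (0 : ℝ), min (ρ / 2) (cK / 2) * (q t ⬝ᵥ q t + deriv q t ⬝ᵥ deriv q t)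
      ≤ V ρ K (q 0) (deriv q 0) :=
    fun t ht => (min_mul_add_le_V hKcoercive _ _).trans (hV ht)
  have hc : 0 < min (ρ / 2) (cK / 2) := by positivity
  refine ⟨⟨_, hc, hbound⟩, _, fun t ht => sqrt_le_sqrt_div_of_mul_add_le hc ?_ ?_ (hbound t ht)⟩
  · simpa using dotProduct_star_self_nonneg (q t)
  · simpa using dotProduct_star_self_nonneg (deriv q t)

/-- Along any C² solution of the closed-loop system
`ρ q̈ + (C + U C̃) q̇ + K q = 0` with feedback `U t = u_max s t / √(1 + s t ^ 2)`,
`s t = q̇ᵀ C̃ q̇`, there exists `c > 0` with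
`c (|q t|² + |q̇ t|²) ≤ V(q 0, q̇ 0)` for all `t ≥ 0` (here `|x|² = xᵀx` is the
squared Euclidean norm); in particular `q` and `q̇` are bounded on `[0,∞)`. -/
theorem stmt_5 (N : ℕ) (hN : 1 ≤ N) (ρ u_max : ℝ) (hρ : 0 < ρ) (hu : 0 < u_max)
    (C Ct K : Matrix (Fin N) (Fin N) ℝ)
    (hC : C.PosSemidef) (hCt : Ct.PosDef) (hK : K.PosDef)
    (q : ℝ → Fin N → ℝ) (hq : ContDiff ℝ 2 q)
    (U s : ℝ → ℝ)
    (hs : ∀ t, s t = deriv q t ⬝ᵥ Ct.mulVec (deriv q t))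
    (hU : ∀ t, U t = u_max * s t / Real.sqrt (1 + s t ^ 2))
    (hode : ∀ t, ρ • deriv (deriv q) t + C.mulVec (deriv q t)
        + U t • Ct.mulVec (deriv q t) + K.mulVec (q t) = 0) :
    (∃ c > (0:ℝ), ∀ t ≥ (0:ℝ),
        c * (q t ⬝ᵥ q t + deriv q t ⬝ᵥ deriv q t) ≤ V ρ K (q 0) (deriv q 0)) ∧
    ∃ M : ℝ, ∀ t ≥ (0:ℝ),
        Real.sqrt (q t ⬝ᵥ q t) ≤ M ∧ Real.sqrt (deriv q t ⬝ᵥ deriv q t) ≤ M :=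
  stmt_5_general N ρ u_max hρ hu C Ct K hC hCt hK q hq U s hs hU hode
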